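/- arXiv:math/0412047 — 2 statements merged into one kernel-verified Lean document; each statement's English description precedes it below -/
import Mathlib

section
/- For every τ > 0 and C_r > 0 there exists C = C(τ, C_r) > 0 with the following property. Let y ∈ ℝ³, let σ, σ̃ ≥ 0 and s, m > 0, and let f, r : ℝ³ → ℝ be measurable functions such that |r(x)| ≤ C_r |x−y|^σ for x ∈ B₁(y), |r(x)| ≤ C_r |x−y|^{σ̃} for x ∈ ℝ³ ∖ B₁(y), |f(x)| ≤ C_r |x|^{−s} for x ∈ B₁(0), and |f(x)| ≤ C_r |x|^{−m} for x ∈ ℝ³ ∖ B₁(0). If σ, σ̃ ≤ m − 2 − τ and s + τ < σ + 2, then for every μ > 0 and all v, w ∈ C_c^∞(ℝ³) with ∫_{ℝ³} |∇v|² ≤ 1 and ∫_{ℝ³} |∇w|² ≤ 1: ∫_{ℝ³} |r(x)| μ^{−2} |f((x−y)/μ)| |v(x)| |w(x)| dx ≤ C μ^σ if 0 < μ ≤ 1, and ≤ C (μ^{s−2} + μ^{σ̃}) if μ > 1. -/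
open MeasureTheory Set Metric
open scoped ENNReal NNReal

noncomputable section Stmt6Aux

variable {E : Type*} [NormedAddCommGroup E] [NormedSpace ℝ E] [MeasurableSpace E] [BorelSpace E]
  [FiniteDimensional ℝ E] [Nontrivial E]

private lemma stmt6_polar_lintegral (μ : Measure E) [μ.IsAddHaarMeasure] (h : E → ℝ≥0∞)
    (hm : Measurable h) :
    ∫⁻ x, h x ∂μ = ∫⁻ ω : sphere (0:E) 1, ∫⁻ r in Ioi (0:ℝ),
      ENNReal.ofReal (r ^ (Module.finrank ℝ E - 1)) * h (r • (ω:E)) ∂volume ∂(μ.toSphere) := by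
  have h1 : ∫⁻ x, h x ∂μ = ∫⁻ x : ({(0:E)}ᶜ : Set E), h x ∂(μ.comap (↑)) := by
    rw [lintegral_subtype_comap (measurableSet_singleton (0:E)).compl]
    rw [restrict_compl_singleton]
  rw [h1]
  have h2 := (μ.measurePreserving_homeomorphUnitSphereProd).lintegral_comp
    (f := fun p : sphere (0:E) 1 × Ioi (0:ℝ) => h (p.2.1 • p.1.1)) ?_
  · have h3 : ∀ x : ({(0:E)}ᶜ : Set E),
        h ((((homeomorphUnitSphereProd E) x).2 : ℝ) • (((homeomorphUnitSphereProd E) x).1 : E))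
          = h x := by
      intro x
      congr 1
      simp only [homeomorphUnitSphereProd_apply_fst_coe, homeomorphUnitSphereProd_apply_snd_coe]
      rw [smul_smul, mul_inv_cancel₀ (norm_ne_zero_iff.2 x.2), one_smul]
    simp only [h3] at h2
    rw [h2, lintegral_prod]
    · refine lintegral_congr fun ω => ?_
      rw [Measure.volumeIoiPow, lintegral_withDensity_eq_lintegral_mul]
      · rw [show (((fun r : Ioi (0:ℝ) => ENNReal.ofReal ((r:ℝ) ^ (Module.finrank ℝ E - 1))) *
            fun y : Ioi (0:ℝ) => h ((y:ℝ) • (ω:E)))) = fun y : Ioi (0:ℝ) =>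
            (fun t : ℝ => ENNReal.ofReal (t ^ (Module.finrank ℝ E - 1)) * h (t • (ω:E))) (y:ℝ)
            from rfl]
        rw [lintegral_subtype_comap measurableSet_Ioi]
      · exact (measurable_subtype_coe.pow_const _).ennreal_ofReal
      · exact hm.comp (by fun_prop)
    · exact (hm.comp ((measurable_subtype_coe.comp measurable_snd).smul
        (measurable_subtype_coe.comp measurable_fst))).aemeasurable
  · exact hm.comp ((measurable_subtype_coe.comp measurable_snd).smul
      (measurable_subtype_coe.comp measurable_fst))

private lemma stmt6_hardy1d (φ : ℝ → ℝ) (hφ : ContDiff ℝ 1 φ) (hs : HasCompactSupport φ) :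
    ∫⁻ r in Ioi (0:ℝ), ENNReal.ofReal ((φ r)^2)
      ≤ 4 * ∫⁻ r in Ioi (0:ℝ), ENNReal.ofReal (r^2 * (deriv φ r)^2) := by
  have hφc : Continuous φ := hφ.continuous
  have hφd : Differentiable ℝ φ := hφ.differentiable one_ne_zero
  have hφ'c : Continuous (deriv φ) := hφ.continuous_deriv le_rfl
  obtain ⟨R₀, hR₀⟩ := hs.isBounded.subset_closedBall 0
  set R : ℝ := max R₀ 0 + 1 with hRdef
  have hR : 0 < R := by positivity
  have hzero : ∀ r : ℝ, R ≤ |r| → φ r = 0 := by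
    intro r hr
    apply image_eq_zero_of_notMem_tsupport
    intro hmem
    have := hR₀ hmem
    simp only [mem_closedBall, dist_zero_right, Real.norm_eq_abs] at this
    have h1 : R₀ ≤ max R₀ 0 := le_max_left _ _
    linarith
  have hderiv : ∀ x ∈ uIcc (0:ℝ) R, HasDerivAt (fun r => r * φ r ^ 2)
      ((φ x)^2 + x * (2 * φ x * deriv φ x)) x := by
    intro x _
    have h1 : HasDerivAt (fun r : ℝ => r) 1 x := hasDerivAt_id x
    have h2 : HasDerivAt (fun r => φ r ^ 2) (2 * φ x * deriv φ x) x := by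
      have := ((hφd x).hasDerivAt).fun_pow 2
      simpa [mul_comm, mul_assoc, mul_left_comm] using this
    simpa [one_mul] using h1.fun_mul h2
  have hcont : Continuous fun x : ℝ => (φ x)^2 + x * (2 * φ x * deriv φ x) := by
    continuity
  have hftc : ∫ x in (0:ℝ)..R, ((φ x)^2 + x * (2 * φ x * deriv φ x))
      = R * φ R ^ 2 - 0 * φ 0 ^ 2 := by
    exact intervalIntegral.integral_eq_sub_of_hasDerivAt hderiv
      (hcont.intervalIntegrable _ _)
  have hφR : φ R = 0 := hzero R (by rw [abs_of_pos hR])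
  rw [hφR] at hftc
  simp only [zero_mul, mul_zero, zero_pow, sub_zero, ne_eq, OfNat.ofNat_ne_zero,
    not_false_eq_true, mul_zero] at hftc
  have hsplit : ∫ x in (0:ℝ)..R, ((φ x)^2 + x * (2 * φ x * deriv φ x))
      = (∫ x in (0:ℝ)..R, (φ x)^2) + ∫ x in (0:ℝ)..R, x * (2 * φ x * deriv φ x) := by
    apply intervalIntegral.integral_add
    · exact ((hφc.pow 2).intervalIntegrable _ _)
    · exact ((continuous_id.mul ((continuous_const.mul hφc).mul hφ'c)).intervalIntegrable _ _)
  have hA_eq : (∫ x in (0:ℝ)..R, (φ x)^2) = - ∫ x in (0:ℝ)..R, x * (2 * φ x * deriv φ x) := by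
    rw [hsplit] at hftc; linarith
  have hAB : (∫ x in (0:ℝ)..R, (φ x)^2)
      ≤ (∫ x in (0:ℝ)..R, ((φ x)^2 / 2 + 2 * (x^2 * (deriv φ x)^2))) := by
    rw [hA_eq, ← intervalIntegral.integral_neg]
    apply intervalIntegral.integral_mono_on hR.le
    · exact ((continuous_id.mul ((continuous_const.mul hφc).mul hφ'c)).neg).intervalIntegrable _ _
    · exact (((hφc.pow 2).div_const 2).add
        (continuous_const.mul ((continuous_pow 2).mul (hφ'c.pow 2)))).intervalIntegrable _ _
    · intro x _
      nlinarith [sq_nonneg (φ x + 2 * x * deriv φ x)]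
  have hsplit2 : (∫ x in (0:ℝ)..R, ((φ x)^2 / 2 + 2 * (x^2 * (deriv φ x)^2)))
      = (∫ x in (0:ℝ)..R, (φ x)^2) / 2 + 2 * ∫ x in (0:ℝ)..R, x^2 * (deriv φ x)^2 := by
    rw [intervalIntegral.integral_add, intervalIntegral.integral_div,
      intervalIntegral.integral_const_mul]
    · exact ((hφc.pow 2).div_const 2).intervalIntegrable _ _
    · exact (continuous_const.mul ((continuous_pow 2).mul (hφ'c.pow 2))).intervalIntegrable _ _
  have hA4B : (∫ x in (0:ℝ)..R, (φ x)^2) ≤ 4 * ∫ x in (0:ℝ)..R, x^2 * (deriv φ x)^2 := by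
    rw [hsplit2] at hAB; linarith
  have hIoc : ∀ (g : ℝ → ℝ), (∫ x in (0:ℝ)..R, g x) = ∫ x in Ioc (0:ℝ) R, g x := fun g =>
    intervalIntegral.integral_of_le hR.le
  have hLHS : ∫⁻ r in Ioi (0:ℝ), ENNReal.ofReal ((φ r)^2)
      = ENNReal.ofReal (∫ x in (0:ℝ)..R, (φ x)^2) := by
    have hsp : Ioi (0:ℝ) = Ioc 0 R ∪ Ioi R := (Ioc_union_Ioi_eq_Ioi hR.le).symm
    rw [hsp, lintegral_union measurableSet_Ioi Ioc_disjoint_Ioi_same]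
    have hz : ∫⁻ r in Ioi R, ENNReal.ofReal ((φ r)^2) = 0 := by
      have he : ∀ x ∈ Ioi R, ENNReal.ofReal ((φ x)^2) = (0:ℝ≥0∞) := fun x hx => by
        rw [hzero x ((le_of_lt hx).trans (le_abs_self x))]; simp
      rw [setLIntegral_congr_fun measurableSet_Ioi he]
      simp
    rw [hz, add_zero, hIoc]
    rw [← ofReal_integral_eq_lintegral_ofReal]
    · exact ((hφc.pow 2).integrableOn_Ioc)
    · exact ae_of_all _ fun x => sq_nonneg _
  have hRHS : ENNReal.ofReal (∫ x in (0:ℝ)..R, x^2 * (deriv φ x)^2)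
      ≤ ∫⁻ r in Ioi (0:ℝ), ENNReal.ofReal (r^2 * (deriv φ r)^2) := by
    rw [hIoc, ofReal_integral_eq_lintegral_ofReal (f := fun x => x^2 * (deriv φ x)^2)
      (μ := volume.restrict (Ioc 0 R))
      (show Integrable (fun x => x^2 * (deriv φ x)^2) (volume.restrict (Ioc 0 R)) from
        ((continuous_pow 2).mul (hφ'c.pow 2)).integrableOn_Ioc)
      (ae_of_all _ fun x => mul_nonneg (sq_nonneg _) (sq_nonneg _))]
    exact lintegral_mono_set Ioc_subset_Ioi_self
  calc ∫⁻ r in Ioi (0:ℝ), ENNReal.ofReal ((φ r)^2)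
      = ENNReal.ofReal (∫ x in (0:ℝ)..R, (φ x)^2) := hLHS
    _ ≤ ENNReal.ofReal (4 * ∫ x in (0:ℝ)..R, x^2 * (deriv φ x)^2) := ENNReal.ofReal_le_ofReal hA4B
    _ = 4 * ENNReal.ofReal (∫ x in (0:ℝ)..R, x^2 * (deriv φ x)^2) := by
        rw [ENNReal.ofReal_mul (by norm_num)]; norm_num
    _ ≤ 4 * ∫⁻ r in Ioi (0:ℝ), ENNReal.ofReal (r^2 * (deriv φ r)^2) := by
        gcongr

private abbrev E3 := EuclideanSpace ℝ (Fin 3)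

private lemma stmt6_hardy0 (u : E3 → ℝ) (hu : ContDiff ℝ 1 u) (h2u : HasCompactSupport u) :
    ∫⁻ x : E3, ENNReal.ofReal ((u x)^2 / ‖x‖^2)
      ≤ 4 * ∫⁻ x : E3, ENNReal.ofReal (‖fderiv ℝ u x‖^2) := by
  have hrank : Module.finrank ℝ E3 - 1 = 2 := by simp [finrank_euclideanSpace]
  have hucont : Continuous u := hu.continuous
  have hfc : Continuous (fderiv ℝ u) := hu.continuous_fderiv one_ne_zero
  have hm1 : Measurable fun x : E3 => ENNReal.ofReal ((u x)^2 / ‖x‖^2) := by fun_prop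
  have hm2 : Measurable fun x : E3 => ENNReal.ofReal (‖fderiv ℝ u x‖^2) := by fun_prop
  rw [stmt6_polar_lintegral volume _ hm1, stmt6_polar_lintegral volume _ hm2, hrank,
    ← lintegral_const_mul' 4 _ (by norm_num)]
  refine lintegral_mono fun ω => ?_
  rw [← lintegral_const_mul' 4 _ (by norm_num)]
  have hω : ‖(ω:E3)‖ = 1 := by
    have := ω.2; simpa [mem_sphere_iff_norm] using this
  set φ : ℝ → ℝ := fun r => u (r • (ω:E3)) with hφdef
  have hsm : ContDiff ℝ 1 fun r : ℝ => r • (ω:E3) := (contDiff_id.smul contDiff_const)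
  have hφdiff : ContDiff ℝ 1 φ := hu.comp hsm
  have hφsupp : HasCompactSupport φ := by
    apply h2u.comp_isClosedEmbedding
    apply Isometry.isClosedEmbedding
    intro a b
    have hω' : ‖(ω:E3)‖₊ = 1 := by ext; simpa using hω
    rw [edist_dist, edist_dist, dist_eq_norm, dist_eq_norm, ← sub_smul, norm_smul, hω, mul_one]
  have hderiv : ∀ r : ℝ, HasDerivAt φ (fderiv ℝ u (r • (ω:E3)) (ω:E3)) r := by
    intro r
    have h1 : HasFDerivAt u (fderiv ℝ u (r • (ω:E3))) (r • (ω:E3)) :=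
      (hu.differentiable one_ne_zero).differentiableAt.hasFDerivAt
    have h2 : HasDerivAt (fun r : ℝ => r • (ω:E3)) (ω:E3) r := by
      simpa using (hasDerivAt_id r).smul_const (ω:E3)
    exact h1.comp_hasDerivAt r h2
  calc ∫⁻ r in Ioi (0:ℝ), ENNReal.ofReal (r^2) * ENNReal.ofReal ((u (r • (ω:E3)))^2 / ‖r • (ω:E3)‖^2)
      = ∫⁻ r in Ioi (0:ℝ), ENNReal.ofReal ((φ r)^2) := by
        refine setLIntegral_congr_fun measurableSet_Ioi (fun r hr => ?_)
        have hr0 : (0:ℝ) < r := hr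
        rw [norm_smul, hω, mul_one, Real.norm_eq_abs, ← ENNReal.ofReal_mul (by positivity)]
        congr 1
        field_simp [abs_of_pos hr0]
        rw [abs_of_pos hr0]
    _ ≤ 4 * ∫⁻ r in Ioi (0:ℝ), ENNReal.ofReal (r^2 * (deriv φ r)^2) :=
        stmt6_hardy1d φ hφdiff hφsupp
    _ ≤ 4 * ∫⁻ r in Ioi (0:ℝ), ENNReal.ofReal (r^2) * ENNReal.ofReal (‖fderiv ℝ u (r • (ω:E3))‖^2) := by
        gcongr with r
        rw [← ENNReal.ofReal_mul (sq_nonneg r)]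
        apply ENNReal.ofReal_le_ofReal
        have h3 : deriv φ r = fderiv ℝ u (r • (ω:E3)) (ω:E3) := (hderiv r).deriv
        have h4 : |fderiv ℝ u (r • (ω:E3)) (ω:E3)| ≤ ‖fderiv ℝ u (r • (ω:E3))‖ := by
          have := (fderiv ℝ u (r • (ω:E3))).le_opNorm (ω:E3)
          rwa [hω, mul_one, Real.norm_eq_abs] at this
        have h5 : (deriv φ r)^2 ≤ ‖fderiv ℝ u (r • (ω:E3))‖^2 := by
          rw [h3, ← sq_abs]
          exact pow_le_pow_left₀ (abs_nonneg _) h4 2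
        nlinarith [sq_nonneg r]
    _ = ∫⁻ r in Ioi (0:ℝ), 4 * (ENNReal.ofReal (r^2) * ENNReal.ofReal (‖fderiv ℝ u (r • (ω:E3))‖^2)) :=
        (lintegral_const_mul' 4 _ (by norm_num)).symm

private lemma stmt6_hardy3d (y : E3) (v : E3 → ℝ) (hv : ContDiff ℝ 1 v)
    (h2v : HasCompactSupport v) (hint : (∫ x, ‖gradient v x‖^2) ≤ 1) :
    ∫⁻ x : E3, ENNReal.ofReal ((v x)^2 / ‖x - y‖^2) ≤ 4 := by
  set u : E3 → ℝ := fun z => v (z + y) with hudef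
  have hu : ContDiff ℝ 1 u := hv.comp (contDiff_id.add contDiff_const)
  have h2u : HasCompactSupport u := h2v.comp_homeomorph (Homeomorph.addRight y)
  have hgradnorm : ∀ x : E3, ‖gradient v x‖ = ‖fderiv ℝ v x‖ := fun x =>
    (InnerProductSpace.toDual ℝ E3).symm.norm_map (fderiv ℝ v x)
  have hfderivu : ∀ z : E3, fderiv ℝ u z = fderiv ℝ v (z + y) := by
    intro z
    have h1 : HasFDerivAt (fun z : E3 => z + y) (ContinuousLinearMap.id ℝ E3) z :=
      (hasFDerivAt_id z).add_const y
    have h2 : HasFDerivAt v (fderiv ℝ v (z + y)) (z + y) :=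
      (hv.differentiable one_ne_zero).differentiableAt.hasFDerivAt
    have := h2.comp z h1
    have h3 := this.fderiv; simp at h3; exact h3
  have hLHS : ∫⁻ x : E3, ENNReal.ofReal ((v x)^2 / ‖x - y‖^2)
      = ∫⁻ z : E3, ENNReal.ofReal ((u z)^2 / ‖z‖^2) := by
    rw [← lintegral_add_right_eq_self (fun x => ENNReal.ofReal ((v x)^2 / ‖x - y‖^2)) y]
    simp [hudef]
  have hRHS : ∫⁻ z : E3, ENNReal.ofReal (‖fderiv ℝ u z‖^2)
      = ∫⁻ x : E3, ENNReal.ofReal (‖fderiv ℝ v x‖^2) := by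
    simp_rw [hfderivu]
    exact lintegral_add_right_eq_self (fun x => ENNReal.ofReal (‖fderiv ℝ v x‖^2)) y
  have hintf : Integrable (fun x : E3 => ‖fderiv ℝ v x‖^2) := by
    apply Continuous.integrable_of_hasCompactSupport
    · exact ((hv.continuous_fderiv one_ne_zero).norm).pow 2
    · exact ((h2v.fderiv ℝ).norm).comp_left (g := (· ^ 2)) (by norm_num)
  have hof : ∫⁻ x : E3, ENNReal.ofReal (‖fderiv ℝ v x‖^2)
      = ENNReal.ofReal (∫ x : E3, ‖fderiv ℝ v x‖^2) :=
    (ofReal_integral_eq_lintegral_ofReal hintf (ae_of_all _ fun x => sq_nonneg _)).symm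
  calc ∫⁻ x : E3, ENNReal.ofReal ((v x)^2 / ‖x - y‖^2)
      = ∫⁻ z : E3, ENNReal.ofReal ((u z)^2 / ‖z‖^2) := hLHS
    _ ≤ 4 * ∫⁻ z : E3, ENNReal.ofReal (‖fderiv ℝ u z‖^2) := stmt6_hardy0 u hu h2u
    _ = 4 * ENNReal.ofReal (∫ x : E3, ‖fderiv ℝ v x‖^2) := by rw [hRHS, hof]
    _ ≤ 4 * ENNReal.ofReal 1 := by
        gcongr
        calc (∫ x : E3, ‖fderiv ℝ v x‖^2) = ∫ x : E3, ‖gradient v x‖^2 := by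
              simp_rw [hgradnorm]
          _ ≤ 1 := hint
    _ = 4 := by norm_num

private lemma stmt6_core_eq (Cr t μ a b : ℝ) (ht : 0 < t) (hμ : 0 < μ) :
    (Cr * t ^ a) * μ ^ (-2:ℝ) * (Cr * (t/μ) ^ (-b))
      = Cr^2 * (μ ^ (b-2) * t ^ (a-b+2)) / t ^ 2 := by
  have e1 : (t/μ) ^ (-b) = t ^ (-b) * μ ^ b := by
    rw [Real.div_rpow ht.le hμ.le, Real.rpow_neg hμ.le, div_eq_mul_inv, inv_inv]
  have e2 : μ ^ (b-(2:ℝ)) = μ ^ b * μ ^ (-2:ℝ) := by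
    rw [← Real.rpow_add hμ]; ring_nf
  have e3 : t ^ (a-b+(2:ℝ)) = t ^ a * t ^ (-b) * t ^ (2:ℝ) := by
    rw [← Real.rpow_add ht, ← Real.rpow_add ht]; ring_nf
  have e4 : t ^ (2:ℝ) = t ^ (2:ℕ) := by
    rw [← Real.rpow_natCast t 2]; norm_num
  rw [e1, e2, e3, e4]
  have ht2 : (t:ℝ) ^ (2:ℕ) ≠ 0 := by positivity
  field_simp

private lemma stmt6_core_le (Cr t μ a b K : ℝ) (hCr : 0 < Cr) (ht : 0 < t) (hμ : 0 < μ)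
    (h : μ ^ (b-2) * t ^ (a-b+2) ≤ K) :
    (Cr * t ^ a) * μ ^ (-2:ℝ) * (Cr * (t/μ) ^ (-b)) ≤ Cr^2 * K / t ^ 2 := by
  rw [stmt6_core_eq Cr t μ a b ht hμ]
  gcongr

private lemma stmt6_exp_bound_le1 (τ σ σ' s m t μ : ℝ) (hτ : 0 < τ) (hσ : 0 ≤ σ)
    (hm1 : σ ≤ m - 2 - τ) (hm2 : σ' ≤ m - 2 - τ) (hsτ : s + τ < σ + 2)
    (ht : 0 < t) (hμ : 0 < μ) (hμ1 : μ ≤ 1) :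
    (t < 1 → t/μ < 1 → μ ^ (s-2) * t ^ (σ-s+2) ≤ μ ^ σ) ∧
    (t < 1 → 1 ≤ t/μ → μ ^ (m-2) * t ^ (σ-m+2) ≤ μ ^ σ) ∧
    (1 ≤ t → t/μ < 1 → False) ∧
    (1 ≤ t → 1 ≤ t/μ → μ ^ (m-2) * t ^ (σ'-m+2) ≤ μ ^ σ) := by
  refine ⟨fun ht1 htμ => ?_, fun ht1 htμ => ?_, fun ht1 htμ => ?_, fun ht1 htμ => ?_⟩
  · have htμ' : t ≤ μ := by rw [div_lt_one hμ] at htμ; exact htμ.le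
    calc μ ^ (s-2) * t ^ (σ-s+2) ≤ μ ^ (s-2) * μ ^ (σ-s+2) :=
          mul_le_mul_of_nonneg_left (Real.rpow_le_rpow ht.le htμ' (by linarith))
            (Real.rpow_pos_of_pos hμ _).le
      _ = μ ^ σ := by rw [← Real.rpow_add hμ]; ring_nf
  · have htμ' : μ ≤ t := by rw [le_div_iff₀ hμ, one_mul] at htμ; exact htμ
    calc μ ^ (m-2) * t ^ (σ-m+2) ≤ μ ^ (m-2) * μ ^ (σ-m+2) :=
          mul_le_mul_of_nonneg_left (Real.rpow_le_rpow_of_nonpos hμ htμ' (by linarith))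
            (Real.rpow_pos_of_pos hμ _).le
      _ = μ ^ σ := by rw [← Real.rpow_add hμ]; ring_nf
  · rw [div_lt_one hμ] at htμ; linarith
  · calc μ ^ (m-2) * t ^ (σ'-m+2) ≤ μ ^ (m-2) * 1 :=
          mul_le_mul_of_nonneg_left (Real.rpow_le_one_of_one_le_of_nonpos ht1 (by linarith))
            (Real.rpow_pos_of_pos hμ _).le
      _ = μ ^ (m-2) := mul_one _
      _ ≤ μ ^ σ := Real.rpow_le_rpow_of_exponent_ge hμ hμ1 (by linarith)

private lemma stmt6_exp_bound_gt1 (τ σ σ' s m t μ : ℝ) (hτ : 0 < τ) (hσ : 0 ≤ σ)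
    (hm2 : σ' ≤ m - 2 - τ) (hsτ : s + τ < σ + 2)
    (ht : 0 < t) (hμ : 0 < μ) (hμ1 : 1 < μ) :
    (t < 1 → t/μ < 1 → μ ^ (s-2) * t ^ (σ-s+2) ≤ μ ^ (s-2) + μ ^ σ') ∧
    (t < 1 → 1 ≤ t/μ → False) ∧
    (1 ≤ t → t/μ < 1 → μ ^ (s-2) * t ^ (σ'-s+2) ≤ μ ^ (s-2) + μ ^ σ') ∧
    (1 ≤ t → 1 ≤ t/μ → μ ^ (m-2) * t ^ (σ'-m+2) ≤ μ ^ (s-2) + μ ^ σ') := by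
  have hp1 : (0:ℝ) < μ ^ (s-2) := Real.rpow_pos_of_pos hμ _
  have hp2 : (0:ℝ) < μ ^ σ' := Real.rpow_pos_of_pos hμ _
  refine ⟨fun ht1 htμ => ?_, fun ht1 htμ => ?_, fun ht1 htμ => ?_, fun ht1 htμ => ?_⟩
  · have h1 : t ^ (σ-s+2) ≤ 1 := Real.rpow_le_one ht.le ht1.le (by linarith)
    nlinarith
  · rw [le_div_iff₀ hμ, one_mul] at htμ; linarith
  · have htμ' : t ≤ μ := by rw [div_lt_one hμ] at htμ; exact htμ.le
    rcases le_or_gt 0 (σ'-s+2) with hc | hc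
    · have h1 : t ^ (σ'-s+2) ≤ μ ^ (σ'-s+2) := Real.rpow_le_rpow ht.le htμ' hc
      calc μ ^ (s-2) * t ^ (σ'-s+2) ≤ μ ^ (s-2) * μ ^ (σ'-s+2) :=
            mul_le_mul_of_nonneg_left h1 (Real.rpow_pos_of_pos hμ _).le
        _ = μ ^ σ' := by rw [← Real.rpow_add hμ]; ring_nf
        _ ≤ μ ^ (s-2) + μ ^ σ' := by linarith
    · have h1 : t ^ (σ'-s+2) ≤ 1 := Real.rpow_le_one_of_one_le_of_nonpos ht1 hc.le
      nlinarith
  · have htμ' : μ ≤ t := by rw [le_div_iff₀ hμ, one_mul] at htμ; exact htμ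
    calc μ ^ (m-2) * t ^ (σ'-m+2) ≤ μ ^ (m-2) * μ ^ (σ'-m+2) :=
          mul_le_mul_of_nonneg_left (Real.rpow_le_rpow_of_nonpos hμ htμ' (by linarith))
            (Real.rpow_pos_of_pos hμ _).le
      _ = μ ^ σ' := by rw [← Real.rpow_add hμ]; ring_nf
      _ ≤ μ ^ (s-2) + μ ^ σ' := by linarith

private lemma stmt6_sq_half_lint (y : E3) (v : E3 → ℝ) (hv : ContDiff ℝ 1 v)
    (h2v : HasCompactSupport v) (hint : (∫ x, ‖gradient v x‖^2) ≤ 1) :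
    (∫⁻ x : E3, (ENNReal.ofReal (|v x| / ‖x - y‖)) ^ (2:ℝ)) ^ (1/(2:ℝ)) ≤ 2 := by
  have h1 : ∀ x : E3, (ENNReal.ofReal (|v x| / ‖x - y‖)) ^ (2:ℝ)
      = ENNReal.ofReal ((v x)^2 / ‖x - y‖^2) := by
    intro x
    rw [ENNReal.ofReal_rpow_of_nonneg (by positivity) (by norm_num)]
    congr 1
    rw [Real.rpow_two, div_pow, sq_abs]
  simp_rw [h1]
  have h2 := stmt6_hardy3d y v hv h2v hint
  calc (∫⁻ x : E3, ENNReal.ofReal ((v x)^2 / ‖x - y‖^2)) ^ (1/(2:ℝ))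
      ≤ (4:ℝ≥0∞) ^ (1/(2:ℝ)) := ENNReal.rpow_le_rpow h2 (by norm_num)
    _ = 2 := by
        rw [show (4:ℝ≥0∞) = (2:ℝ≥0∞)^(2:ℝ) by
          rw [show (2:ℝ) = ((2:ℕ):ℝ) by norm_num, ENNReal.rpow_natCast]; norm_num]
        rw [← ENNReal.rpow_mul]
        norm_num

private lemma stmt6_main_est (y : E3) (g : E3 → ℝ)
    (K : ℝ) (hK : 0 ≤ K)
    (hpt : ∀ x : E3, x ≠ y → g x ≤ K / ‖x - y‖^2)
    (v w : E3 → ℝ) (hv : ContDiff ℝ 1 v) (h2v : HasCompactSupport v)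
    (hintv : (∫ x, ‖gradient v x‖^2) ≤ 1)
    (hw : ContDiff ℝ 1 w) (h2w : HasCompactSupport w)
    (hintw : (∫ x, ‖gradient w x‖^2) ≤ 1) :
    ∫⁻ x : E3, ENNReal.ofReal (g x * |v x| * |w x|) ≤ ENNReal.ofReal (4 * K) := by
  set F : E3 → ℝ≥0∞ := fun x => ENNReal.ofReal (|v x| / ‖x - y‖) with hF
  set G : E3 → ℝ≥0∞ := fun x => ENNReal.ofReal (|w x| / ‖x - y‖) with hG
  have hFm : Measurable F :=
    ((hv.continuous.measurable.abs).div (measurable_id.sub_const y).norm).ennreal_ofReal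
  have hGm : Measurable G :=
    ((hw.continuous.measurable.abs).div (measurable_id.sub_const y).norm).ennreal_ofReal
  have step1 : ∫⁻ x : E3, ENNReal.ofReal (g x * |v x| * |w x|)
      ≤ ∫⁻ x : E3, ENNReal.ofReal K * (F x * G x) := by
    apply lintegral_mono_ae
    have hy : ∀ᵐ x : E3, x ≠ y := by
      refine (ae_iff.2 ?_)
      simpa using measure_singleton y
    filter_upwards [hy] with x hx
    have ht : (0:ℝ) < ‖x - y‖ := by
      rw [norm_pos_iff]; exact sub_ne_zero_of_ne hx
    have hb : g x * |v x| * |w x| ≤ K / ‖x - y‖^2 * |v x| * |w x| := by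
      have := hpt x hx
      have h1 : 0 ≤ |v x| := abs_nonneg _
      have h2 : 0 ≤ |w x| := abs_nonneg _
      nlinarith [abs_nonneg (v x), abs_nonneg (w x), mul_le_mul_of_nonneg_right this h1]
    calc ENNReal.ofReal (g x * |v x| * |w x|)
        ≤ ENNReal.ofReal (K / ‖x - y‖^2 * |v x| * |w x|) := ENNReal.ofReal_le_ofReal hb
      _ = ENNReal.ofReal K * (F x * G x) := by
          rw [hF, hG, ← ENNReal.ofReal_mul (by positivity), ← ENNReal.ofReal_mul (by positivity)]
          congr 1
          field_simp
  have step2 : ∫⁻ x : E3, ENNReal.ofReal K * (F x * G x)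
      = ENNReal.ofReal K * ∫⁻ x : E3, F x * G x :=
    lintegral_const_mul' _ _ ENNReal.ofReal_ne_top
  have step3 : ∫⁻ x : E3, F x * G x
      ≤ (∫⁻ x : E3, F x ^ (2:ℝ)) ^ (1/(2:ℝ)) * (∫⁻ x : E3, G x ^ (2:ℝ)) ^ (1/(2:ℝ)) := by
    apply ENNReal.lintegral_mul_le_Lp_mul_Lq volume Real.HolderConjugate.two_two
      hFm.aemeasurable hGm.aemeasurable
  calc ∫⁻ x : E3, ENNReal.ofReal (g x * |v x| * |w x|)
      ≤ ENNReal.ofReal K * ∫⁻ x : E3, F x * G x := by rw [← step2]; exact step1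
    _ ≤ ENNReal.ofReal K * ((∫⁻ x : E3, F x ^ (2:ℝ)) ^ (1/(2:ℝ))
        * (∫⁻ x : E3, G x ^ (2:ℝ)) ^ (1/(2:ℝ))) := by gcongr
    _ ≤ ENNReal.ofReal K * (2 * 2) := by
        gcongr
        · exact stmt6_sq_half_lint y v hv h2v hintv
        · exact stmt6_sq_half_lint y w hw h2w hintw
    _ = ENNReal.ofReal (4 * K) := by
        rw [ENNReal.ofReal_mul (by norm_num), mul_comm]
        norm_num

end Stmt6Aux

theorem stmt6 (τ Cr : ℝ) (hτ : 0 < τ) (hCr : 0 < Cr) :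
    ∃ C > (0 : ℝ), ∀ (y : EuclideanSpace ℝ (Fin 3)) (σ σ' s m : ℝ)
      (f r : EuclideanSpace ℝ (Fin 3) → ℝ),
      0 ≤ σ → 0 ≤ σ' → 0 < s → 0 < m → Measurable f → Measurable r →
      (∀ x ∈ Metric.ball y 1, |r x| ≤ Cr * ‖x - y‖ ^ σ) →
      (∀ x ∉ Metric.ball y 1, |r x| ≤ Cr * ‖x - y‖ ^ σ') →
      (∀ x ∈ Metric.ball (0 : EuclideanSpace ℝ (Fin 3)) 1, |f x| ≤ Cr * ‖x‖ ^ (-s)) →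
      (∀ x ∉ Metric.ball (0 : EuclideanSpace ℝ (Fin 3)) 1, |f x| ≤ Cr * ‖x‖ ^ (-m)) →
      σ ≤ m - 2 - τ → σ' ≤ m - 2 - τ → s + τ < σ + 2 →
      ∀ μ : ℝ, 0 < μ →
      ∀ v w : EuclideanSpace ℝ (Fin 3) → ℝ, ContDiff ℝ (⊤ : ℕ∞) v → HasCompactSupport v →
        (∫ x, ‖gradient v x‖ ^ 2) ≤ 1 → ContDiff ℝ (⊤ : ℕ∞) w → HasCompactSupport w →
        (∫ x, ‖gradient w x‖ ^ 2) ≤ 1 →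
        (μ ≤ 1 →
          (∫⁻ x, ENNReal.ofReal (|r x| * μ ^ (-2 : ℝ) * |f (μ⁻¹ • (x - y))| * |v x| * |w x|))
            ≤ ENNReal.ofReal (C * μ ^ σ)) ∧
        (1 < μ →
          (∫⁻ x, ENNReal.ofReal (|r x| * μ ^ (-2 : ℝ) * |f (μ⁻¹ • (x - y))| * |v x| * |w x|))
            ≤ ENNReal.ofReal (C * (μ ^ (s - 2) + μ ^ σ'))) := by
  refine ⟨4 * Cr^2, by positivity, ?_⟩
  intro y σ σ' s m f r hσ hσ' hs hm hfm hrm hr1 hr2 hf1 hf2 hm1 hm2 hsτ μ hμ v w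
    hv h2v hiv hw h2w hiw
  set g : E3 → ℝ := fun x => |r x| * μ ^ (-2:ℝ) * |f (μ⁻¹ • (x - y))| with hgdef
  have hgnn : ∀ x, 0 ≤ g x := fun x => by
    have : (0:ℝ) ≤ μ ^ (-2:ℝ) := Real.rpow_nonneg hμ.le _
    positivity
  -- pointwise bound machinery
  have hnorm : ∀ x : E3, ‖μ⁻¹ • (x - y)‖ = ‖x - y‖ / μ := fun x => by
    rw [norm_smul, norm_inv, Real.norm_eq_abs, abs_of_pos hμ, div_eq_mul_inv, mul_comm]
  have hgbound : ∀ x : E3, x ≠ y → ∀ a b : ℝ,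
      (|r x| ≤ Cr * ‖x - y‖ ^ a) → (|f (μ⁻¹ • (x - y))| ≤ Cr * (‖x - y‖/μ) ^ (-b)) →
      g x ≤ (Cr * ‖x - y‖ ^ a) * μ ^ (-2:ℝ) * (Cr * (‖x - y‖/μ) ^ (-b)) := by
    intro x hx a b hA hB
    have ht : (0:ℝ) < ‖x - y‖ := by rw [norm_pos_iff]; exact sub_ne_zero_of_ne hx
    have hμ2 : (0:ℝ) ≤ μ ^ (-2:ℝ) := Real.rpow_nonneg hμ.le _
    have h1 : |r x| * μ ^ (-2:ℝ) ≤ (Cr * ‖x - y‖ ^ a) * μ ^ (-2:ℝ) :=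
      mul_le_mul_of_nonneg_right hA hμ2
    exact mul_le_mul h1 hB (abs_nonneg _) (by positivity)
  have hrbound : ∀ x : E3, (‖x - y‖ < 1 → |r x| ≤ Cr * ‖x - y‖ ^ σ)
      ∧ (1 ≤ ‖x - y‖ → |r x| ≤ Cr * ‖x - y‖ ^ σ') := by
    intro x
    constructor
    · intro h; exact hr1 x (by rwa [Metric.mem_ball, dist_eq_norm])
    · intro h; exact hr2 x (by rw [Metric.mem_ball, dist_eq_norm]; linarith)
  have hfbound : ∀ x : E3, (‖x - y‖/μ < 1 → |f (μ⁻¹ • (x - y))| ≤ Cr * (‖x - y‖/μ) ^ (-s))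
      ∧ (1 ≤ ‖x - y‖/μ → |f (μ⁻¹ • (x - y))| ≤ Cr * (‖x - y‖/μ) ^ (-m)) := by
    intro x
    constructor
    · intro h
      have := hf1 (μ⁻¹ • (x - y)) (by rw [Metric.mem_ball, dist_zero_right, hnorm]; exact h)
      rwa [hnorm] at this
    · intro h
      have := hf2 (μ⁻¹ • (x - y)) (by rw [Metric.mem_ball, dist_zero_right, hnorm]; linarith)
      rwa [hnorm] at this
  constructor
  · -- case μ ≤ 1
    intro hμ1
    have hpt : ∀ x : E3, x ≠ y → g x ≤ Cr^2 * (μ ^ σ) / ‖x - y‖^2 := by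
      intro x hx
      have ht : (0:ℝ) < ‖x - y‖ := by rw [norm_pos_iff]; exact sub_ne_zero_of_ne hx
      obtain ⟨e1, e2, e3, e4⟩ := stmt6_exp_bound_le1 τ σ σ' s m ‖x - y‖ μ hτ hσ hm1 hm2 hsτ ht hμ hμ1
      by_cases h1 : ‖x - y‖ < 1
      · by_cases h2 : ‖x - y‖/μ < 1
        · exact le_trans (hgbound x hx σ s ((hrbound x).1 h1) ((hfbound x).1 h2))
            (stmt6_core_le Cr _ μ σ s _ hCr ht hμ (e1 h1 h2))
        · exact le_trans (hgbound x hx σ m ((hrbound x).1 h1) ((hfbound x).2 (not_lt.1 h2)))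
            (stmt6_core_le Cr _ μ σ m _ hCr ht hμ (e2 h1 (not_lt.1 h2)))
      · by_cases h2 : ‖x - y‖/μ < 1
        · exact absurd (e3 (not_lt.1 h1) h2) (fun h => h)
        · exact le_trans (hgbound x hx σ' m ((hrbound x).2 (not_lt.1 h1))
            ((hfbound x).2 (not_lt.1 h2)))
            (stmt6_core_le Cr _ μ σ' m _ hCr ht hμ (e4 (not_lt.1 h1) (not_lt.1 h2)))
    have hKnn : (0:ℝ) ≤ Cr^2 * (μ ^ σ) := by positivity
    have := stmt6_main_est y g (Cr^2 * (μ ^ σ)) hKnn hpt v w (hv.of_le (by simp)) h2v hiv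
      (hw.of_le (by simp)) h2w hiw
    calc (∫⁻ x, ENNReal.ofReal (|r x| * μ ^ (-2 : ℝ) * |f (μ⁻¹ • (x - y))| * |v x| * |w x|))
        = ∫⁻ x : E3, ENNReal.ofReal (g x * |v x| * |w x|) := rfl
      _ ≤ ENNReal.ofReal (4 * (Cr^2 * (μ ^ σ))) := this
      _ = ENNReal.ofReal (4 * Cr^2 * μ ^ σ) := by ring_nf
  · -- case 1 < μ
    intro hμ1
    have hpt : ∀ x : E3, x ≠ y → g x ≤ Cr^2 * (μ ^ (s-2) + μ ^ σ') / ‖x - y‖^2 := by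
      intro x hx
      have ht : (0:ℝ) < ‖x - y‖ := by rw [norm_pos_iff]; exact sub_ne_zero_of_ne hx
      obtain ⟨e1, e2, e3, e4⟩ := stmt6_exp_bound_gt1 τ σ σ' s m ‖x - y‖ μ hτ hσ hm2 hsτ ht hμ hμ1
      by_cases h1 : ‖x - y‖ < 1
      · by_cases h2 : ‖x - y‖/μ < 1
        · exact le_trans (hgbound x hx σ s ((hrbound x).1 h1) ((hfbound x).1 h2))
            (stmt6_core_le Cr _ μ σ s _ hCr ht hμ (e1 h1 h2))
        · exact absurd (e2 h1 (not_lt.1 h2)) (fun h => h)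
      · by_cases h2 : ‖x - y‖/μ < 1
        · exact le_trans (hgbound x hx σ' s ((hrbound x).2 (not_lt.1 h1)) ((hfbound x).1 h2))
            (stmt6_core_le Cr _ μ σ' s _ hCr ht hμ (e3 (not_lt.1 h1) h2))
        · exact le_trans (hgbound x hx σ' m ((hrbound x).2 (not_lt.1 h1))
            ((hfbound x).2 (not_lt.1 h2)))
            (stmt6_core_le Cr _ μ σ' m _ hCr ht hμ (e4 (not_lt.1 h1) (not_lt.1 h2)))
    have hp1 : (0:ℝ) < μ ^ (s-2) := Real.rpow_pos_of_pos hμ _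
    have hp2 : (0:ℝ) < μ ^ σ' := Real.rpow_pos_of_pos hμ _
    have hKnn : (0:ℝ) ≤ Cr^2 * (μ ^ (s-2) + μ ^ σ') := by positivity
    have := stmt6_main_est y g (Cr^2 * (μ ^ (s-2) + μ ^ σ')) hKnn hpt v w (hv.of_le (by simp)) h2v hiv
      (hw.of_le (by simp)) h2w hiw
    calc (∫⁻ x, ENNReal.ofReal (|r x| * μ ^ (-2 : ℝ) * |f (μ⁻¹ • (x - y))| * |v x| * |w x|))
        = ∫⁻ x : E3, ENNReal.ofReal (g x * |v x| * |w x|) := rfl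
      _ ≤ ENNReal.ofReal (4 * (Cr^2 * (μ ^ (s-2) + μ ^ σ'))) := this
      _ = ENNReal.ofReal (4 * Cr^2 * (μ ^ (s-2) + μ ^ σ')) := by ring_nf
end

section
/- For every j ∈ ℕ, ∫₀^∞ r^6 (1+r²)^{−5} (1 − 2/(1+r²)) P_j^{(5/2,5/2)}(1 − 2/(1+r²)) dr = Γ(3/2) Γ(7/2 + j) (j² + 6j + 2) / (2 Γ(6 + j)). -/
open MeasureTheory

/-- The Jacobi polynomial `P_j^{(σ,σ)}`, via the Rodrigues formula. -/
noncomputable def jacobiP (σ : ℝ) (j : ℕ) (x : ℝ) : ℝ :=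
  ((-1 : ℝ) ^ j / (2 ^ j * (Nat.factorial j : ℝ))) * (1 - x ^ 2) ^ (-σ) *
    iteratedDeriv j (fun t : ℝ => (1 - t ^ 2) ^ (σ + (j : ℝ))) x

/-!
Substituting `x = 1 - 2 / (1 + r²)` turns the integral into
`(1/32) ∫_{-1}^{1} (1 - x)^{1/2} (1 + x)^{5/2} x P_j(x) dx`. By the Rodrigues formula this
integrand is a constant multiple of `x / (1 - x)² · (d/dx)^j (1 - x²)^{j + 5/2}`. Integrating by
parts `j` times moves all derivatives onto `x / (1 - x)²`, whose `j`-th derivative is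
`j! (x + j) / (1 - x)^{j+2}`; the boundary terms vanish because `(1 - x²)^{j + 5/2}` vanishes to
high enough order at `±1`. Writing `x + j = (j + 1) - (1 - x)` leaves two Beta integrals.
-/

open Real Set Filter Topology Polynomial
open scoped Nat

theorem integral_rpow_mul_one_sub_rpow {u v : ℝ} (hu : 0 < u) (hv : 0 < v) :
    ∫ t in (0:ℝ)..1, t ^ (u - 1) * (1 - t) ^ (v - 1) = Gamma u * Gamma v / Gamma (u + v) := by
  have hβ := Complex.betaIntegral_eq_Gamma_mul_div u v (by simpa using hu) (by simpa using hv)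
  rw [Complex.betaIntegral, ← Complex.ofReal_add, Complex.Gamma_ofReal, Complex.Gamma_ofReal,
    Complex.Gamma_ofReal, ← Complex.ofReal_mul, ← Complex.ofReal_div] at hβ
  rw [← Complex.ofReal_inj, ← hβ, ← intervalIntegral.integral_ofReal]
  refine intervalIntegral.integral_congr fun t ht => ?_
  rw [uIcc_of_le zero_le_one] at ht
  push_cast
  rw [Complex.ofReal_cpow ht.1, Complex.ofReal_cpow (sub_nonneg.2 ht.2)]
  push_cast
  ring_nf

theorem integral_Ioo_one_sub_rpow_mul_one_add_rpow {p q : ℝ} (hp : -1 < p) (hq : -1 < q) :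
    ∫ x in Ioo (-1:ℝ) 1, (1 - x) ^ p * (1 + x) ^ q
      = 2 ^ (p + q + 1) * (Gamma (p + 1) * Gamma (q + 1) / Gamma (p + q + 2)) := by
  rw [← integral_Ioc_eq_integral_Ioo, ← intervalIntegral.integral_of_le (by norm_num)]
  have hsub := intervalIntegral.smul_integral_comp_mul_add
    (fun x : ℝ => (1 - x) ^ p * (1 + x) ^ q) (c := 2) (d := -1) (a := 0) (b := 1)
  norm_num at hsub
  rw [← hsub]
  have hβ := integral_rpow_mul_one_sub_rpow (u := q + 1) (v := p + 1) (by linarith) (by linarith)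
  simp only [add_sub_cancel_right] at hβ
  have hrescale : ∀ x ∈ uIcc (0:ℝ) 1,
      (1 - (2 * x + -1)) ^ p * (2 * x) ^ q = 2 ^ p * 2 ^ q * (x ^ q * (1 - x) ^ p) := by
    intro x hx
    rw [uIcc_of_le zero_le_one] at hx
    rw [show 1 - (2 * x + -1) = 2 * (1 - x) by ring, mul_rpow zero_le_two (by linarith [hx.2]),
      mul_rpow zero_le_two hx.1]
    ring
  rw [intervalIntegral.integral_congr hrescale, intervalIntegral.integral_const_mul, hβ,
    rpow_add two_pos, rpow_add two_pos, rpow_one, show q + 1 + (p + 1) = p + q + 2 by ring]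
  ring

theorem integral_Ioo_deriv_mul_eq_neg_mul_deriv {f f' g g' : ℝ → ℝ} {a b : ℝ} (hab : a < b)
    (hf : ∀ x ∈ Ioo a b, HasDerivAt f (f' x) x) (hg : ∀ x ∈ Ioo a b, HasDerivAt g (g' x) x)
    (hf'g : IntegrableOn (fun x => f' x * g x) (Ioo a b))
    (hfg' : IntegrableOn (fun x => f x * g' x) (Ioo a b))
    (ha : Tendsto (fun x => f x * g x) (𝓝[>] a) (𝓝 0))
    (hb : Tendsto (fun x => f x * g x) (𝓝[<] b) (𝓝 0)) :
    ∫ x in Ioo a b, f' x * g x = -∫ x in Ioo a b, f x * g' x := by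
  have hftc := intervalIntegral.integral_eq_sub_of_hasDerivAt_of_tendsto hab
    (fun x hx => (hf x hx).mul (hg x hx))
    ((intervalIntegrable_iff_integrableOn_Ioo_of_le hab.le).2 (hf'g.add hfg')) ha hb
  rw [intervalIntegral.integral_of_le hab.le, integral_Ioc_eq_integral_Ioo,
    integral_add hf'g hfg', sub_zero] at hftc
  linarith

noncomputable def rodriguesPoly (a : ℝ) : ℕ → ℝ[X]
  | 0 => 1
  | k + 1 => C (-2 * (a - k)) * X * rodriguesPoly a k
      + (1 - X ^ 2) * derivative (rodriguesPoly a k)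

theorem hasDerivAt_one_sub_sq_rpow_mul_rodriguesPoly (a : ℝ) (k : ℕ) {x : ℝ}
    (hx : x ∈ Ioo (-1:ℝ) 1) :
    HasDerivAt (fun t => (1 - t ^ 2) ^ (a - k) * (rodriguesPoly a k).eval t)
      ((1 - x ^ 2) ^ (a - (k + 1 : ℕ)) * (rodriguesPoly a (k + 1)).eval x) x := by
  have hpos : 0 < 1 - x ^ 2 := by nlinarith [hx.1, hx.2]
  have hbase : HasDerivAt (fun t : ℝ => 1 - t ^ 2) (-(2 * x)) x := by
    simpa using (hasDerivAt_pow 2 x).const_sub 1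
  refine ((hbase.rpow_const (p := a - k) (Or.inl hpos.ne')).mul
    ((rodriguesPoly a k).hasDerivAt x)).congr_deriv ?_
  have hsplit : (1 - x ^ 2) ^ (a - k) = (1 - x ^ 2) ^ (a - k - 1) * (1 - x ^ 2) := by
    rw [← rpow_add_one hpos.ne', sub_add_cancel]
  rw [rodriguesPoly, hsplit, Nat.cast_succ, ← sub_sub]
  simp only [eval_add, eval_mul, eval_C, eval_X, eval_sub, eval_one, eval_pow]
  ring

theorem iteratedDeriv_one_sub_sq_rpow (a : ℝ) (k : ℕ) {x : ℝ} (hx : x ∈ Ioo (-1:ℝ) 1) :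
    iteratedDeriv k (fun t => (1 - t ^ 2) ^ a) x
      = (1 - x ^ 2) ^ (a - k) * (rodriguesPoly a k).eval x := by
  induction k generalizing x with
  | zero => simp [rodriguesPoly]
  | succ k ih =>
    rw [iteratedDeriv_succ,
      ((hasDerivAt_one_sub_sq_rpow_mul_rodriguesPoly a k hx).congr_of_eventuallyEq
        (eventually_of_mem (isOpen_Ioo.mem_nhds hx) fun y hy => ih hy)).deriv]

theorem hasDerivAt_iteratedDeriv_one_sub_sq_rpow (a : ℝ) (k : ℕ) {x : ℝ}
    (hx : x ∈ Ioo (-1:ℝ) 1) :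
    HasDerivAt (iteratedDeriv k fun t => (1 - t ^ 2) ^ a)
      (iteratedDeriv (k + 1) (fun t => (1 - t ^ 2) ^ a) x) x := by
  rw [iteratedDeriv_one_sub_sq_rpow a (k + 1) hx]
  exact (hasDerivAt_one_sub_sq_rpow_mul_rodriguesPoly a k hx).congr_of_eventuallyEq
    (eventually_of_mem (isOpen_Ioo.mem_nhds hx) fun y hy => iteratedDeriv_one_sub_sq_rpow a k hy)

/-- The `m`-th derivative of `x / (1 - x) ^ 2`. -/
noncomputable def kernelDeriv (m : ℕ) (x : ℝ) : ℝ := m ! * (x + m) / (1 - x) ^ (m + 2)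

theorem hasDerivAt_kernelDeriv (m : ℕ) {x : ℝ} (hx : x ≠ 1) :
    HasDerivAt (kernelDeriv m) (kernelDeriv (m + 1) x) x := by
  have hx' : 1 - x ≠ 0 := sub_ne_zero.2 hx.symm
  refine ((((hasDerivAt_id' x).add_const (m : ℝ)).const_mul (m ! : ℝ)).div
    (((hasDerivAt_id' x).const_sub 1).fun_pow (m + 2)) (pow_ne_zero _ hx')).congr_deriv ?_
  rw [kernelDeriv, Nat.factorial_succ,
    div_eq_div_iff (pow_ne_zero _ (pow_ne_zero _ hx')) (pow_ne_zero _ hx')]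
  push_cast [Nat.add_sub_cancel]
  ring

theorem continuous_one_sub_rpow_mul_one_add_rpow_mul {p q : ℝ} (hp : 0 ≤ p) (hq : 0 ≤ q)
    {g : ℝ → ℝ} (hg : Continuous g) : Continuous fun x => (1 - x) ^ p * (1 + x) ^ q * g x :=
  (((continuous_const.sub continuous_id).rpow_const fun _ => Or.inr hp).mul
    ((continuous_const.add continuous_id).rpow_const fun _ => Or.inr hq)).mul hg

theorem kernelDeriv_mul_iteratedDeriv_one_sub_sq_rpow (a : ℝ) (m k : ℕ) {x : ℝ}
    (hx : x ∈ Ioo (-1:ℝ) 1) :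
    kernelDeriv m x * iteratedDeriv k (fun t => (1 - t ^ 2) ^ a) x
      = (1 - x) ^ (a - k - (m + 2)) * (1 + x) ^ (a - k)
          * (m ! * (x + m) * (rodriguesPoly a k).eval x) := by
  have h1 : 0 < 1 - x := by linarith [hx.2]
  have h2 : 0 < 1 + x := by linarith [hx.1]
  rw [iteratedDeriv_one_sub_sq_rpow a k hx, kernelDeriv,
    show (m : ℝ) + 2 = (m + 2 : ℕ) by push_cast; ring, rpow_sub_natCast h1.ne',
    show 1 - x ^ 2 = (1 - x) * (1 + x) by ring, mul_rpow h1.le h2.le]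
  ring

section KernelIntegrationByParts

variable {a : ℝ} {m k : ℕ}

theorem integrableOn_kernelDeriv_mul_iteratedDeriv (h : m + k + 2 ≤ a) :
    IntegrableOn (fun x => kernelDeriv m x * iteratedDeriv k (fun t => (1 - t ^ 2) ^ a) x)
      (Ioo (-1) 1) :=
  ((continuous_one_sub_rpow_mul_one_add_rpow_mul (by linarith) (by linarith)
    (by fun_prop)).integrableOn_Icc.mono_set Ioo_subset_Icc_self).congr_fun
    (fun _ hx => (kernelDeriv_mul_iteratedDeriv_one_sub_sq_rpow a m k hx).symm) measurableSet_Ioo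

theorem tendsto_kernelDeriv_mul_iteratedDeriv_nhdsGT (h : m + k + 2 < a) :
    Tendsto (fun x => kernelDeriv m x * iteratedDeriv k (fun t => (1 - t ^ 2) ^ a) x)
      (𝓝[>] (-1)) (𝓝 0) := by
  have hcont := continuous_one_sub_rpow_mul_one_add_rpow_mul (p := a - k - (m + 2)) (q := a - k)
    (by linarith) (by linarith) (g := fun x => m ! * (x + m) * (rodriguesPoly a k).eval x)
    (by fun_prop)
  have hzero : (1 - -1 : ℝ) ^ (a - k - (m + 2)) * (1 + -1) ^ (a - k)
      * (m ! * (-1 + m) * (rodriguesPoly a k).eval (-1)) = 0 := by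
    rw [add_neg_cancel, zero_rpow (by linarith), mul_zero, zero_mul]
  refine (hzero ▸ (hcont.tendsto (-1)).mono_left nhdsWithin_le_nhds).congr' ?_
  filter_upwards [Ioo_mem_nhdsGT (by norm_num : (-1:ℝ) < 1)] with x hx
  exact (kernelDeriv_mul_iteratedDeriv_one_sub_sq_rpow a m k hx).symm

theorem tendsto_kernelDeriv_mul_iteratedDeriv_nhdsLT (h : m + k + 2 < a) :
    Tendsto (fun x => kernelDeriv m x * iteratedDeriv k (fun t => (1 - t ^ 2) ^ a) x)
      (𝓝[<] 1) (𝓝 0) := by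
  have hcont := continuous_one_sub_rpow_mul_one_add_rpow_mul (p := a - k - (m + 2)) (q := a - k)
    (by linarith) (by linarith) (g := fun x => m ! * (x + m) * (rodriguesPoly a k).eval x)
    (by fun_prop)
  have hzero : (1 - 1 : ℝ) ^ (a - k - (m + 2)) * (1 + 1) ^ (a - k)
      * (m ! * (1 + m) * (rodriguesPoly a k).eval 1) = 0 := by
    rw [sub_self, zero_rpow (by linarith), zero_mul, zero_mul]
  refine (hzero ▸ (hcont.tendsto 1).mono_left nhdsWithin_le_nhds).congr' ?_
  filter_upwards [Ioo_mem_nhdsLT (by norm_num : (-1:ℝ) < 1)] with x hx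
  exact (kernelDeriv_mul_iteratedDeriv_one_sub_sq_rpow a m k hx).symm

theorem integral_kernelDeriv_succ_mul_iteratedDeriv (h : m + k + 3 ≤ a) :
    ∫ x in Ioo (-1:ℝ) 1, kernelDeriv (m + 1) x * iteratedDeriv k (fun t => (1 - t ^ 2) ^ a) x
      = -∫ x in Ioo (-1:ℝ) 1,
          kernelDeriv m x * iteratedDeriv (k + 1) (fun t => (1 - t ^ 2) ^ a) x :=
  integral_Ioo_deriv_mul_eq_neg_mul_deriv (by norm_num)
    (fun _ hx => hasDerivAt_kernelDeriv m hx.2.ne)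
    (fun _ hx => hasDerivAt_iteratedDeriv_one_sub_sq_rpow a k hx)
    (integrableOn_kernelDeriv_mul_iteratedDeriv (by push_cast; linarith))
    (integrableOn_kernelDeriv_mul_iteratedDeriv (by push_cast; linarith))
    (tendsto_kernelDeriv_mul_iteratedDeriv_nhdsGT (by linarith))
    (tendsto_kernelDeriv_mul_iteratedDeriv_nhdsLT (by linarith))

theorem integral_kernelDeriv_mul_iteratedDeriv (h : m + k + 2 ≤ a) :
    ∫ x in Ioo (-1:ℝ) 1, kernelDeriv m x * iteratedDeriv k (fun t => (1 - t ^ 2) ^ a) x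
      = (-1) ^ k * ∫ x in Ioo (-1:ℝ) 1, kernelDeriv (m + k) x * (1 - x ^ 2) ^ a := by
  induction k generalizing m with
  | zero => simp
  | succ k ih =>
    push_cast at h
    rw [← neg_neg (∫ x in Ioo (-1:ℝ) 1, _), ← integral_kernelDeriv_succ_mul_iteratedDeriv
      (by linarith), ih (by push_cast; linarith), pow_succ, ← add_assoc, add_right_comm m 1 k]
    ring

end KernelIntegrationByParts

theorem integral_kernelDeriv_mul_one_sub_sq_rpow {σ : ℝ} (hσ : 2 ≤ σ) (m : ℕ) :
    ∫ x in Ioo (-1:ℝ) 1, kernelDeriv m x * (1 - x ^ 2) ^ (σ + m)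
      = m ! * ((m + 1) * (2 ^ (2 * σ + m - 1) * (Gamma (σ - 1) * Gamma (σ + m + 1)
            / Gamma (2 * σ + m)))
          - 2 ^ (2 * σ + m) * (Gamma σ * Gamma (σ + m + 1) / Gamma (2 * σ + m + 1))) := by
  have hpoint : ∀ x ∈ Ioo (-1:ℝ) 1, kernelDeriv m x * (1 - x ^ 2) ^ (σ + m)
      = m ! * ((m + 1) * ((1 - x) ^ (σ - 2) * (1 + x) ^ (σ + m))
          - (1 - x) ^ (σ - 1) * (1 + x) ^ (σ + m)) := by
    intro x hx
    have h := kernelDeriv_mul_iteratedDeriv_one_sub_sq_rpow (σ + m) m 0 hx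
    rw [iteratedDeriv_zero] at h
    rw [h, show σ - 1 = σ - 2 + 1 by ring, rpow_add_one (by linarith [hx.2]),
      show σ + m - (0 : ℕ) - (m + 2) = σ - 2 by push_cast; ring]
    simp only [rodriguesPoly, eval_one, CharP.cast_eq_zero, sub_zero]
    ring
  have hint : ∀ p : ℝ, 0 ≤ p →
      IntegrableOn (fun x : ℝ => (1 - x) ^ p * (1 + x) ^ (σ + m)) (Ioo (-1) 1) :=
    fun p hp => (continuous_one_sub_rpow_mul_one_add_rpow_mul (q := σ + m) (g := fun _ => 1) hp
      (by positivity) continuous_const).integrableOn_Icc.mono_set Ioo_subset_Icc_self |>.congr_fun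
      (fun _ _ => mul_one _) measurableSet_Ioo
  have hm : (0 : ℝ) ≤ m := m.cast_nonneg
  rw [setIntegral_congr_fun measurableSet_Ioo hpoint, integral_const_mul,
    integral_sub ((hint _ (by linarith)).const_mul _) (hint _ (by linarith)), integral_const_mul,
    integral_Ioo_one_sub_rpow_mul_one_add_rpow (by linarith) (by linarith),
    integral_Ioo_one_sub_rpow_mul_one_add_rpow (by linarith) (by linarith)]
  ring_nf

theorem one_sub_rpow_mul_one_add_rpow_mul_id_mul_jacobiP (σ : ℝ) (j : ℕ) {x : ℝ}
    (hx : x ∈ Ioo (-1:ℝ) 1) :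
    (1 - x) ^ (σ - 2) * (1 + x) ^ σ * x * jacobiP σ j x
      = (-1) ^ j / (2 ^ j * j !)
          * (kernelDeriv 0 x * iteratedDeriv j (fun t => (1 - t ^ 2) ^ (σ + j)) x) := by
  have h1 : 0 < 1 - x := by linarith [hx.2]
  have h2 : 0 < 1 + x := by linarith [hx.1]
  have hcancel : (1 - x) ^ σ * (1 + x) ^ σ * (1 - x ^ 2) ^ (-σ) = 1 := by
    rw [← mul_rpow h1.le h2.le, show (1 - x) * (1 + x) = 1 - x ^ 2 by ring,
      rpow_neg (by nlinarith), mul_inv_cancel₀ (rpow_pos_of_pos (by nlinarith) σ).ne']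
  rw [jacobiP, kernelDeriv, show σ - 2 = σ - (2 : ℕ) by norm_num, rpow_sub_natCast h1.ne']
  simp only [Nat.factorial_zero, Nat.cast_one, Nat.cast_zero, zero_add, add_zero]
  linear_combination (-1) ^ j / (2 ^ j * j !) * x / (1 - x) ^ 2
    * iteratedDeriv j (fun t => (1 - t ^ 2) ^ (σ + j)) x * hcancel

theorem integral_one_sub_rpow_mul_one_add_rpow_mul_id_mul_jacobiP {σ : ℝ} (hσ : 2 ≤ σ)
    (j : ℕ) :
    ∫ x in Ioo (-1:ℝ) 1, (1 - x) ^ (σ - 2) * (1 + x) ^ σ * x * jacobiP σ j x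
      = 2 ^ (2 * σ - 1) * Gamma (σ + j + 1) *
          ((j + 1) * Gamma (σ - 1) / Gamma (2 * σ + j)
            - 2 * Gamma σ / Gamma (2 * σ + j + 1)) := by
  rw [setIntegral_congr_fun measurableSet_Ioo
      fun x hx => one_sub_rpow_mul_one_add_rpow_mul_id_mul_jacobiP σ j hx,
    integral_const_mul, integral_kernelDeriv_mul_iteratedDeriv (by push_cast; linarith), zero_add,
    integral_kernelDeriv_mul_one_sub_sq_rpow hσ, show 2 * σ + j - 1 = 2 * σ - 1 + j by ring,
    rpow_add two_pos, rpow_add two_pos, rpow_natCast, ← mul_assoc, div_mul_eq_mul_div,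
    ← mul_pow, neg_one_mul, neg_neg, one_pow, show (2:ℝ) ^ (2 * σ) = 2 ^ (2 * σ - 1) * 2 by
      rw [← rpow_add_one two_ne_zero, sub_add_cancel]]
  field_simp

theorem image_one_sub_two_div_one_add_sq_Ioi :
    (fun r : ℝ => 1 - 2 / (1 + r ^ 2)) '' Ioi 0 = Ioo (-1) 1 := by
  ext x
  constructor
  · rintro ⟨r, hr, rfl⟩
    have hpos : 0 < 1 + r ^ 2 := by positivity
    have hlt : 2 / (1 + r ^ 2) < 2 := by
      rw [div_lt_iff₀ hpos]; nlinarith [mem_Ioi.1 hr]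
    exact ⟨by linarith, by linarith [div_pos two_pos hpos]⟩
  · rintro ⟨h1, h2⟩
    have h1' : 0 < 1 + x := by linarith
    have h2' : 0 < 1 - x := by linarith
    refine ⟨√((1 + x) / (1 - x)), sqrt_pos.2 (by positivity), ?_⟩
    simp only
    rw [sq_sqrt (by positivity)]
    field_simp
    ring

theorem injOn_one_sub_two_div_one_add_sq_Ioi :
    InjOn (fun r : ℝ => 1 - 2 / (1 + r ^ 2)) (Ioi 0) := by
  intro r hr s hs heq
  have hsq : r ^ 2 = s ^ 2 := by
    field_simp at heq
    linarith
  exact (sq_eq_sq₀ (le_of_lt hr) (le_of_lt hs)).1 hsq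

theorem hasDerivAt_one_sub_two_div_one_add_sq (r : ℝ) :
    HasDerivAt (fun r : ℝ => 1 - 2 / (1 + r ^ 2)) (4 * r / (1 + r ^ 2) ^ 2) r := by
  have hpos : 0 < 1 + r ^ 2 := by positivity
  refine (((hasDerivAt_const r (2:ℝ)).div ((hasDerivAt_pow 2 r).const_add 1)
    hpos.ne').const_sub 1).congr_deriv ?_
  field_simp
  ring

theorem integral_Ioi_comp_one_sub_two_div_one_add_sq (g : ℝ → ℝ) :
    ∫ r in Ioi (0:ℝ), 4 * r / (1 + r ^ 2) ^ 2 * g (1 - 2 / (1 + r ^ 2))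
      = ∫ x in Ioo (-1:ℝ) 1, g x := by
  rw [← image_one_sub_two_div_one_add_sq_Ioi, integral_image_eq_integral_abs_deriv_smul
    measurableSet_Ioi (fun r _ => (hasDerivAt_one_sub_two_div_one_add_sq r).hasDerivWithinAt)
    injOn_one_sub_two_div_one_add_sq_Ioi]
  refine setIntegral_congr_fun measurableSet_Ioi fun r hr => ?_
  rw [smul_eq_mul, abs_of_pos (by have : 0 < r := hr; positivity)]

theorem rpow_mul_rpow_of_one_sub_two_div_one_add_sq {r : ℝ} (hr : 0 < r) :
    (2 / (1 + r ^ 2)) ^ (1 / 2 : ℝ) * (2 * r ^ 2 / (1 + r ^ 2)) ^ (5 / 2 : ℝ)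
      = 8 * r ^ 5 / (1 + r ^ 2) ^ 3 := by
  have hpos : 0 < 1 + r ^ 2 := by positivity
  rw [show (5 / 2 : ℝ) = 1 / 2 + (2 : ℕ) by norm_num, rpow_add_natCast (by positivity),
    ← mul_assoc, ← mul_rpow (by positivity) (by positivity),
    show 2 / (1 + r ^ 2) * (2 * r ^ 2 / (1 + r ^ 2)) = (2 * r / (1 + r ^ 2)) ^ 2 by ring,
    ← sqrt_eq_rpow, sqrt_sq (by positivity)]
  field_simp
  ring

theorem integrand_eq_of_one_sub_two_div_one_add_sq (j : ℕ) {r : ℝ} (hr : 0 < r) :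
    r ^ 6 * (1 + r ^ 2) ^ (-5 : ℝ) * (1 - 2 / (1 + r ^ 2))
        * jacobiP (5 / 2) j (1 - 2 / (1 + r ^ 2))
      = 4 * r / (1 + r ^ 2) ^ 2
          * ((1 - (1 - 2 / (1 + r ^ 2))) ^ ((5 / 2 : ℝ) - 2)
            * (1 + (1 - 2 / (1 + r ^ 2))) ^ (5 / 2 : ℝ)
            * (1 - 2 / (1 + r ^ 2)) * jacobiP (5 / 2) j (1 - 2 / (1 + r ^ 2)) / 32) := by
  have hpos : 0 < 1 + r ^ 2 := by positivity
  rw [show (1:ℝ) - (1 - 2 / (1 + r ^ 2)) = 2 / (1 + r ^ 2) by ring,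
    show (1:ℝ) + (1 - 2 / (1 + r ^ 2)) = 2 * r ^ 2 / (1 + r ^ 2) by field_simp; ring,
    show (5 / 2 : ℝ) - 2 = 1 / 2 by norm_num, rpow_mul_rpow_of_one_sub_two_div_one_add_sq hr,
    show (-5 : ℝ) = -(5 : ℕ) by norm_num, rpow_neg hpos.le, rpow_natCast]
  field_simp
  ring

theorem stmt14 (j : ℕ) :
    (∫ r in Set.Ioi (0 : ℝ),
        r ^ 6 * (1 + r ^ 2) ^ (-5 : ℝ) * (1 - 2 / (1 + r ^ 2)) *
          jacobiP (5 / 2) j (1 - 2 / (1 + r ^ 2)))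
      = Real.Gamma (3 / 2) * Real.Gamma (7 / 2 + j) * ((j : ℝ) ^ 2 + 6 * j + 2) /
          (2 * Real.Gamma (6 + j)) := by
  rw [setIntegral_congr_fun measurableSet_Ioi fun r hr =>
      integrand_eq_of_one_sub_two_div_one_add_sq j hr,
    integral_Ioi_comp_one_sub_two_div_one_add_sq
      fun x => (1 - x) ^ ((5 / 2 : ℝ) - 2) * (1 + x) ^ (5 / 2 : ℝ) * x * jacobiP (5 / 2) j x
        / 32,
    integral_div, integral_one_sub_rpow_mul_one_add_rpow_mul_id_mul_jacobiP (by norm_num)]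
  have hΓ : Gamma (5 + j) ≠ 0 := (Gamma_pos_of_pos (by positivity)).ne'
  rw [show (5 / 2 : ℝ) + j + 1 = 7 / 2 + j by ring, show (5 / 2 : ℝ) - 1 = 3 / 2 by norm_num,
    show 2 * (5 / 2 : ℝ) + j + 1 = 6 + j by ring, show 2 * (5 / 2 : ℝ) + j = 5 + j by ring,
    show 2 * (5 / 2 : ℝ) - 1 = (4 : ℕ) by norm_num, rpow_natCast,
    show (6 : ℝ) + j = 5 + j + 1 by ring, Gamma_add_one (by positivity),
    show (5 / 2 : ℝ) = 3 / 2 + 1 by norm_num, Gamma_add_one (by norm_num)]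
  field_simp
  ring
end
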